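/- Let d ≥ 1, n ≥ 1 and let y_1, …, y_n ∈ ℝ^d satisfy Σ_{j=1}^n y_j = 0 and Σ_{j=1}^n y_j y_jᵀ = n I_d. For a > 0, define T(a) = n (π/(a+1))^{d/2} · d/(2(a+1)) − 2 (2π/(2a+1))^{d/2} Σ_{j=1}^n (‖y_j‖²/(2a+1)) exp(−‖y_j‖²/(4a+2)) + (1/n) (π/a)^{d/2} Σ_{i,j=1}^n y_iᵀ y_j exp(−‖y_i − y_j‖²/(4a)). Then lim_{a→∞} (a^{d/2+2} / (n π^{d/2})) · 16 · T(a) = b̃_{1,d} + 2 b_{1,d}, where b_{1,d} = n^{−2} Σ_{i,j=1}^n (y_iᵀ y_j)³ is Mardia's measure of multivariate skewness and b̃_{1,d} = n^{−2} Σ_{i,j=1}^n y_iᵀ y_j ‖y_i‖² ‖y_j‖² is the skewness measure of Móri, Rohatgi and Székely. -/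

import Mathlib

/-!
Scaled by `16 a^{d/2+2} / (n π^{d/2})`, the three terms of `T(a)` become
`8da (a/(a+1))^{d/2+1}`, `-(16/n) a (2a/(2a+1))^{d/2+1} Σ_j ‖y_j‖² e^{-‖y_j‖²/(4a+2)}` and
`(16/n²) a² Σ_{i,j} ⟪y_i,y_j⟫ e^{-‖y_i-y_j‖²/(4a)}`. Their parts linear in `a`, namely `8da`,
`-16da` (as `Σ_j ‖y_j‖² = nd`) and `8da` (from the first-order Taylor term of the exponential),
cancel, and so do the constants `∓8d(d/2+1)` coming from the power factors. What survives is the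
second-order Taylor term `(2n²)⁻¹ Σ_{i,j} ⟪y_i,y_j⟫ ‖y_i-y_j‖⁴` of the third sum, which centering
(`Σ_j ⟪x,y_j⟫ = 0`) and isotropy (`Σ_j ⟪y_i,y_j⟫² = n‖y_i‖²`) reduce to
`b̃_{1,d} + 2 b_{1,d} - 4 Σ_j ‖y_j‖⁴ / n`; the last summand cancels against the first-order Taylor
term of the second sum.
-/

open MeasureTheory Real Filter

/-- Closed form of the weighted `L²`-test statistic `T_{n,a}` for the points
`y 1, …, y n ∈ ℝ^d` and weight parameter `a`. -/
noncomputable def Tstat (d n : ℕ) (y : Fin n → EuclideanSpace ℝ (Fin d)) (a : ℝ) : ℝ :=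
  (n : ℝ) * (π / (a + 1)) ^ ((d : ℝ) / 2) * ((d : ℝ) / (2 * (a + 1)))
    - 2 * (2 * π / (2 * a + 1)) ^ ((d : ℝ) / 2)
        * ∑ j, ‖y j‖ ^ 2 / (2 * a + 1) * Real.exp (-‖y j‖ ^ 2 / (4 * a + 2))
    + (n : ℝ)⁻¹ * (π / a) ^ ((d : ℝ) / 2)
        * ∑ i, ∑ j, (inner ℝ (y i) (y j) : ℝ) * Real.exp (-‖y i - y j‖ ^ 2 / (4 * a))

/-- Mardia's measure of multivariate sample skewness. -/
noncomputable def mardiaSkew (d n : ℕ) (y : Fin n → EuclideanSpace ℝ (Fin d)) : ℝ :=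
  ((n : ℝ) ^ 2)⁻¹ * ∑ i, ∑ j, (inner ℝ (y i) (y j) : ℝ) ^ 3

/-- The measure of multivariate sample skewness of Móri, Rohatgi and Székely. -/
noncomputable def mrsSkew (d n : ℕ) (y : Fin n → EuclideanSpace ℝ (Fin d)) : ℝ :=
  ((n : ℝ) ^ 2)⁻¹ * ∑ i, ∑ j, (inner ℝ (y i) (y j) : ℝ) * ‖y i‖ ^ 2 * ‖y j‖ ^ 2

open Topology Finset
open scoped RealInnerProductSpace

theorem tendsto_pow_mul_exp_sub_sum_range {u : ℝ → ℝ} {L : ℝ}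
    (hu : Tendsto (fun x => x * u x) atTop (𝓝 L)) (k : ℕ) :
    Tendsto (fun x => x ^ k * (exp (u x) - ∑ m ∈ range (k + 1), u x ^ m / m.factorial))
      atTop (𝓝 0) := by
  have hu0 : Tendsto u atTop (𝓝 0) := by
    have := hu.mul (tendsto_inv_atTop_zero (𝕜 := ℝ))
    rw [mul_zero] at this
    refine this.congr' ?_
    filter_upwards [eventually_ne_atTop 0] with x hx
    field_simp
  set C : ℝ := (k + 1).succ / ((k + 1).factorial * (k + 1) : ℕ)
  have hlim : Tendsto (fun x => |x * u x| ^ k * |u x| * C) atTop (𝓝 0) := by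
    simpa using ((hu.abs.pow k).mul hu0.abs).mul_const C
  refine squeeze_zero_norm' ?_ hlim
  filter_upwards [hu0.eventually (Metric.closedBall_mem_nhds 0 one_pos)] with x hx
  rw [Real.dist_0_eq_abs] at hx
  calc ‖x ^ k * (exp (u x) - ∑ m ∈ range (k + 1), u x ^ m / m.factorial)‖
      ≤ |x| ^ k * (|u x| ^ (k + 1) * C) := by
        rw [norm_mul, norm_pow, Real.norm_eq_abs, Real.norm_eq_abs]
        gcongr
        simpa [C] using Real.exp_bound hx k.succ_pos
    _ = |x * u x| ^ k * |u x| * C := by rw [abs_mul, mul_pow, pow_succ]; ring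

theorem tendsto_mul_div_add_one_rpow_sub_one (p : ℝ) :
    Tendsto (fun x : ℝ => x * ((x / (x + 1)) ^ p - 1)) atTop (𝓝 (-p)) := by
  have hderiv : HasDerivAt (fun t : ℝ => (1 + t) ^ (-p)) (-p) 0 := by
    simpa using ((hasDerivAt_id (0 : ℝ)).const_add 1).rpow_const (p := -p) (Or.inl (by norm_num))
  have hinv : Tendsto (fun x : ℝ => x⁻¹) atTop (𝓝[≠] 0) :=
    tendsto_inv_atTop_nhdsGT_zero.mono_right (nhdsWithin_mono _ fun _ h => ne_of_gt h)
  refine ((hasDerivAt_iff_tendsto_slope.mp hderiv).comp hinv).congr' ?_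
  filter_upwards [eventually_gt_atTop 0] with x hx
  have hx1 : x / (x + 1) = (1 + x⁻¹)⁻¹ := by field_simp
  have hpos : (0 : ℝ) ≤ 1 + x⁻¹ := by positivity
  simp [slope_def_field, hx1, Real.inv_rpow hpos, Real.rpow_neg hpos, mul_comm]

theorem tendsto_mul_div_four_mul_add_two (q : ℝ) :
    Tendsto (fun a : ℝ => a * (q / (4 * a + 2))) atTop (𝓝 (q / 4)) := by
  have h : Tendsto (fun a : ℝ => q / 4 - q / 2 * (4 * a + 2)⁻¹) atTop (𝓝 (q / 4 - q / 2 * 0)) :=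
    tendsto_const_nhds.sub ((tendsto_inv_atTop_zero.comp (tendsto_id.const_mul_atTop
      four_pos |>.atTop_add tendsto_const_nhds)).const_mul _)
  rw [mul_zero, sub_zero] at h
  refine h.congr' ?_
  filter_upwards [eventually_gt_atTop 0] with a ha
  field_simp
  ring

theorem tendsto_mul_sum_sub_rpow_mul_sum_exp {ι : Type*} [Fintype ι] (q : ι → ℝ) (p : ℝ) :
    Tendsto (fun a : ℝ => a * (∑ j, q j
        - (2 * a / (2 * a + 1)) ^ p * ∑ j, q j * exp (-q j / (4 * a + 2))))
      atTop (𝓝 (p / 2 * ∑ j, q j + (∑ j, q j ^ 2) / 4)) := by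
  have hY : Tendsto (fun a : ℝ => a * ((2 * a / (2 * a + 1)) ^ p - 1)) atTop (𝓝 (-(p / 2))) := by
    convert ((tendsto_mul_div_add_one_rpow_sub_one p).comp
      (tendsto_id.const_mul_atTop two_pos)).const_mul (1 / 2) using 2
    · simp only [Function.comp, id]; ring
    · ring
  have hY1 : Tendsto (fun a : ℝ => (2 * a / (2 * a + 1)) ^ p) atTop (𝓝 1) := by
    have := (hY.mul (tendsto_inv_atTop_zero (𝕜 := ℝ))).const_add 1
    rw [mul_zero, add_zero] at this
    refine this.congr' ?_
    filter_upwards [eventually_ne_atTop 0] with a ha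
    field_simp
    ring
  have hexp : ∀ j, Tendsto (fun a : ℝ => a * (1 - exp (-q j / (4 * a + 2)))) atTop
      (𝓝 (q j / 4)) := by
    intro j
    have hu : Tendsto (fun a : ℝ => a * (-q j / (4 * a + 2))) atTop (𝓝 (-(q j / 4))) := by
      simpa [neg_div] using (tendsto_mul_div_four_mul_add_two (q j)).neg
    convert (tendsto_pow_mul_exp_sub_sum_range hu 1).neg.add hu.neg using 2
    · simp only [Finset.sum_range_succ, Finset.sum_range_zero, Nat.factorial]; push_cast; ring
    · simp
  convert (hY.neg.mul_const (∑ j, q j)).add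
    (hY1.mul (tendsto_finsetSum univ fun j _ => (hexp j).const_mul (q j))) using 2 with a
  · have hsum : ∑ j, q j * (a * (1 - exp (-q j / (4 * a + 2))))
        = a * ∑ j, q j - a * ∑ j, q j * exp (-q j / (4 * a + 2)) := by
      simp only [Finset.mul_sum, ← Finset.sum_sub_distrib]
      exact Finset.sum_congr rfl fun j _ => by ring
    rw [hsum]; ring
  · simp only [sq, Finset.sum_div, mul_div_assoc]; ring

section StandardizedPoints

variable {E ι : Type*} [NormedAddCommGroup E] [InnerProductSpace ℝ E] [Fintype ι]
  {y : ι → E} {s : ℝ}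

theorem sum_inner_eq_zero_of_sum_eq_zero (hc : ∑ j, y j = 0) (x : E) : ∑ j, ⟪x, y j⟫ = 0 := by
  rw [← inner_sum, hc, inner_zero_right]

theorem sum_sum_inner_mul_left_eq_zero (hc : ∑ j, y j = 0) (f : ι → ℝ) :
    ∑ i, ∑ j, ⟪y i, y j⟫ * f i = 0 := by
  simp [← Finset.sum_mul, sum_inner_eq_zero_of_sum_eq_zero hc]

theorem sum_sum_inner_mul_right_eq_zero (hc : ∑ j, y j = 0) (f : ι → ℝ) :
    ∑ i, ∑ j, ⟪y i, y j⟫ * f j = 0 := by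
  rw [Finset.sum_comm]
  simp_rw [real_inner_comm (y _) (y _)]
  exact sum_sum_inner_mul_left_eq_zero hc f

theorem sum_sq_inner_eq (hiso : ∀ u v, ∑ j, ⟪u, y j⟫ * ⟪y j, v⟫ = s * ⟪u, v⟫) (i : ι) :
    ∑ j, ⟪y i, y j⟫ ^ 2 = s * ‖y i‖ ^ 2 := by
  simp_rw [sq, ← real_inner_self_eq_norm_mul_norm, ← hiso]
  exact Finset.sum_congr rfl fun j _ => by rw [real_inner_comm (y j)]

theorem sum_sq_norm_eq_mul_finrank [FiniteDimensional ℝ E]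
    (hiso : ∀ u v, ∑ j, ⟪u, y j⟫ * ⟪y j, v⟫ = s * ⟪u, v⟫) :
    ∑ j, ‖y j‖ ^ 2 = s * Module.finrank ℝ E := by
  let b := stdOrthonormalBasis ℝ E
  calc ∑ j, ‖y j‖ ^ 2 = ∑ j, ∑ k, ⟪b k, y j⟫ * ⟪y j, b k⟫ := by
        refine Finset.sum_congr rfl fun j _ => ?_
        rw [← b.sum_sq_norm_inner_right]
        simp_rw [Real.norm_eq_abs, sq_abs, sq, real_inner_comm (y j)]
    _ = ∑ _k : Fin (Module.finrank ℝ E), s := by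
        rw [Finset.sum_comm]
        simp [hiso, b.orthonormal.1]
    _ = s * Module.finrank ℝ E := by simp [mul_comm]

theorem sum_sum_inner_mul_norm_sub_sq (hc : ∑ j, y j = 0)
    (hiso : ∀ u v, ∑ j, ⟪u, y j⟫ * ⟪y j, v⟫ = s * ⟪u, v⟫) :
    ∑ i, ∑ j, ⟪y i, y j⟫ * ‖y i - y j‖ ^ 2 = -2 * s * ∑ i, ‖y i‖ ^ 2 := by
  have hexp : ∀ i j, ⟪y i, y j⟫ * ‖y i - y j‖ ^ 2
      = ⟪y i, y j⟫ * ‖y i‖ ^ 2 + ⟪y i, y j⟫ * ‖y j‖ ^ 2 - 2 * ⟪y i, y j⟫ ^ 2 := by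
    intro i j; rw [norm_sub_sq_real]; ring
  simp only [hexp, Finset.sum_add_distrib, Finset.sum_sub_distrib, ← Finset.mul_sum,
    sum_sum_inner_mul_left_eq_zero hc, sum_sum_inner_mul_right_eq_zero hc, sum_sq_inner_eq hiso]
  ring

theorem sum_sum_inner_mul_norm_sub_pow_four (hc : ∑ j, y j = 0)
    (hiso : ∀ u v, ∑ j, ⟪u, y j⟫ * ⟪y j, v⟫ = s * ⟪u, v⟫) :
    ∑ i, ∑ j, ⟪y i, y j⟫ * ‖y i - y j‖ ^ 4
      = 4 * ∑ i, ∑ j, ⟪y i, y j⟫ ^ 3 + 2 * ∑ i, ∑ j, ⟪y i, y j⟫ * ‖y i‖ ^ 2 * ‖y j‖ ^ 2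
        - 8 * s * ∑ i, ‖y i‖ ^ 4 := by
  have hexp : ∀ i j, ⟪y i, y j⟫ * ‖y i - y j‖ ^ 4
      = ⟪y i, y j⟫ * ‖y i‖ ^ 4 + ⟪y i, y j⟫ * ‖y j‖ ^ 4 + 4 * ⟪y i, y j⟫ ^ 3
        + 2 * (⟪y i, y j⟫ * ‖y i‖ ^ 2 * ‖y j‖ ^ 2)
        - 4 * (⟪y i, y j⟫ ^ 2 * ‖y i‖ ^ 2) - 4 * (⟪y j, y i⟫ ^ 2 * ‖y j‖ ^ 2) := by
    intro i j; rw [show ‖y i - y j‖ ^ 4 = (‖y i - y j‖ ^ 2) ^ 2 by ring, norm_sub_sq_real,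
      real_inner_comm (y j)]; ring
  have hsq : ∑ i, ∑ j, ⟪y i, y j⟫ ^ 2 * ‖y i‖ ^ 2 = s * ∑ i, ‖y i‖ ^ 4 := by
    simp_rw [← Finset.sum_mul, sum_sq_inner_eq hiso, Finset.mul_sum]; ring_nf
  simp only [hexp, Finset.sum_add_distrib, Finset.sum_sub_distrib, ← Finset.mul_sum,
    sum_sum_inner_mul_left_eq_zero hc, sum_sum_inner_mul_right_eq_zero hc, hsq]
  rw [Finset.sum_comm (f := fun i j => ⟪y j, y i⟫ ^ 2 * ‖y j‖ ^ 2), hsq]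
  ring

theorem tendsto_sq_mul_sum_sum_inner_mul_exp (hc : ∑ j, y j = 0)
    (hiso : ∀ u v, ∑ j, ⟪u, y j⟫ * ⟪y j, v⟫ = s * ⟪u, v⟫) :
    Tendsto (fun a : ℝ => a ^ 2 * ∑ i, ∑ j, ⟪y i, y j⟫ * exp (-‖y i - y j‖ ^ 2 / (4 * a))
        - s * (∑ i, ‖y i‖ ^ 2) / 2 * a) atTop
      (𝓝 ((4 * ∑ i, ∑ j, ⟪y i, y j⟫ ^ 3 + 2 * ∑ i, ∑ j, ⟪y i, y j⟫ * ‖y i‖ ^ 2 * ‖y j‖ ^ 2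
        - 8 * s * ∑ i, ‖y i‖ ^ 4) / 32)) := by
  have hrem : ∀ w : ℝ, Tendsto (fun a : ℝ => a ^ 2 * (exp (-w / (4 * a))
      - ∑ m ∈ range 3, (-w / (4 * a)) ^ m / m.factorial)) atTop (𝓝 0) := by
    intro w
    refine tendsto_pow_mul_exp_sub_sum_range (L := -w / 4) (tendsto_const_nhds.congr' ?_) 2
    filter_upwards [eventually_ne_atTop 0] with a ha
    field_simp
  have hsum := tendsto_finsetSum univ fun i _ => tendsto_finsetSum univ fun j _ =>
    (hrem (‖y i - y j‖ ^ 2)).const_mul ⟪y i, y j⟫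
  simp only [mul_zero, Finset.sum_const_zero] at hsum
  rw [← sum_sum_inner_mul_norm_sub_pow_four hc hiso, ← zero_add (_ / 32)]
  refine (hsum.add_const _).congr' ?_
  filter_upwards [eventually_ne_atTop 0] with a ha
  have hterm : ∀ i j, ⟪y i, y j⟫ * (a ^ 2 * (exp (-‖y i - y j‖ ^ 2 / (4 * a))
      - ∑ m ∈ range 3, (-‖y i - y j‖ ^ 2 / (4 * a)) ^ m / m.factorial))
      = a ^ 2 * (⟪y i, y j⟫ * exp (-‖y i - y j‖ ^ 2 / (4 * a))) - a ^ 2 * ⟪y i, y j⟫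
        + a / 4 * (⟪y i, y j⟫ * ‖y i - y j‖ ^ 2) - ⟪y i, y j⟫ * ‖y i - y j‖ ^ 4 / 32 := by
    intro i j
    simp only [Finset.sum_range_succ, Finset.sum_range_zero, Nat.factorial]
    push_cast
    field_simp
    ring
  simp only [hterm, Finset.sum_add_distrib, Finset.sum_sub_distrib, ← Finset.mul_sum,
    ← Finset.sum_div, sum_sum_inner_mul_norm_sub_sq hc hiso]
  simp only [sum_inner_eq_zero_of_sum_eq_zero hc, Finset.sum_const_zero]
  ring

end StandardizedPoints

theorem EuclideanSpace.sum_inner_mul_inner_of_scatter {d n : ℕ} {s : ℝ}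
    {y : Fin n → EuclideanSpace ℝ (Fin d)}
    (hscatter : ∀ k l : Fin d, ∑ j, y j k * y j l = if k = l then s else 0)
    (u v : EuclideanSpace ℝ (Fin d)) :
    ∑ j, ⟪u, y j⟫ * ⟪y j, v⟫ = s * ⟪u, v⟫ := by
  simp only [PiLp.inner_apply, RCLike.inner_apply, conj_trivial]
  calc ∑ j, (∑ k, y j k * u k) * (∑ l, v l * y j l)
      = ∑ l, ∑ k, u k * v l * ∑ j, y j k * y j l := by
        simp only [Finset.sum_mul, Finset.mul_sum]
        rw [Finset.sum_comm]
        refine Finset.sum_congr rfl fun k _ => ?_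
        rw [Finset.sum_comm]
        exact Finset.sum_congr rfl fun l _ => Finset.sum_congr rfl fun j _ => by ring
    _ = s * ∑ k, v k * u k := by simp [hscatter, Finset.mul_sum, mul_comm]

theorem scaled_Tstat_eq {d n : ℕ} (hn : n ≠ 0) (y : Fin n → EuclideanSpace ℝ (Fin d)) {a : ℝ}
    (ha : 0 < a) :
    a ^ ((d : ℝ) / 2 + 2) / ((n : ℝ) * π ^ ((d : ℝ) / 2)) * (16 * Tstat d n y a)
      = 8 * d * a * (a / (a + 1)) ^ ((d : ℝ) / 2 + 1)
        - 16 / n * a * (2 * a / (2 * a + 1)) ^ ((d : ℝ) / 2 + 1)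
            * ∑ j, ‖y j‖ ^ 2 * exp (-‖y j‖ ^ 2 / (4 * a + 2))
        + 16 / n ^ 2 * a ^ 2 * ∑ i, ∑ j, ⟪y i, y j⟫ * exp (-‖y i - y j‖ ^ 2 / (4 * a)) := by
  have h1 : 0 < a + 1 := by linarith
  have h2 : 0 < 2 * a + 1 := by linarith
  have hpow : ∀ {x : ℝ}, 0 < x → x ^ ((d : ℝ) / 2 + 1) = x ^ ((d : ℝ) / 2) * x := fun hx => by
    rw [Real.rpow_add hx, Real.rpow_one]
  have hpow2 : a ^ ((d : ℝ) / 2 + 2) = a ^ ((d : ℝ) / 2) * a ^ 2 := by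
    rw [Real.rpow_add ha, Real.rpow_two]
  have hsum : ∑ j, ‖y j‖ ^ 2 / (2 * a + 1) * exp (-‖y j‖ ^ 2 / (4 * a + 2))
      = (∑ j, ‖y j‖ ^ 2 * exp (-‖y j‖ ^ 2 / (4 * a + 2))) / (2 * a + 1) := by
    rw [Finset.sum_div]; exact Finset.sum_congr rfl fun j _ => by ring
  simp only [Tstat, hsum]
  rw [Real.div_rpow (by positivity) h1.le, Real.div_rpow (by positivity) h2.le,
    Real.div_rpow (by positivity) ha.le, Real.div_rpow ha.le h1.le,
    Real.div_rpow (by positivity) h2.le, Real.mul_rpow zero_le_two Real.pi_pos.le,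
    Real.mul_rpow zero_le_two ha.le, hpow ha, hpow h1, hpow h2, hpow two_pos, hpow2]
  field_simp
  ring

theorem Tstat_tendsto_skewness_atTop_general
    (d n : ℕ) (hn : 1 ≤ n) (y : Fin n → EuclideanSpace ℝ (Fin d))
    (hcenter : ∑ j, y j = 0)
    (hscatter : ∀ k l : Fin d, ∑ j, y j k * y j l = if k = l then (n : ℝ) else 0) :
    Tendsto (fun a : ℝ =>
        a ^ ((d : ℝ) / 2 + 2) / ((n : ℝ) * π ^ ((d : ℝ) / 2)) * (16 * Tstat d n y a))
      atTop (nhds (mrsSkew d n y + 2 * mardiaSkew d n y)) := by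
  have hn0 : n ≠ 0 := by omega
  have hiso := EuclideanSpace.sum_inner_mul_inner_of_scatter hscatter
  have htrace : ∑ j, ‖y j‖ ^ 2 = n * d := by simpa using sum_sq_norm_eq_mul_finrank hiso
  have hfirst := (tendsto_mul_div_add_one_rpow_sub_one ((d : ℝ) / 2 + 1)).const_mul (8 * (d : ℝ))
  have hsecond := (tendsto_mul_sum_sub_rpow_mul_sum_exp (fun j => ‖y j‖ ^ 2)
    ((d : ℝ) / 2 + 1)).const_mul (16 / (n : ℝ))
  have hthird := (tendsto_sq_mul_sum_sum_inner_mul_exp hcenter hiso).const_mul (16 / (n : ℝ) ^ 2)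
  convert ((hfirst.add hsecond).add hthird).congr' ?_ using 2
  · simp only [mrsSkew, mardiaSkew, htrace, ← pow_mul]
    field_simp
    ring
  · filter_upwards [eventually_gt_atTop 0] with a ha
    rw [scaled_Tstat_eq hn0 y ha, htrace]
    field_simp
    ring

/-- Theorem 2.3. For standardized points (`∑ y_j = 0`,
`∑ y_j y_jᵀ = n I_d`), `16 a^{d/2+2} (nπ^{d/2})⁻¹ T_{n,a} → b̃_{1,d} + 2 b_{1,d}`
as `a → ∞`. -/
theorem Tstat_tendsto_skewness_atTop
    (d n : ℕ) (hd : 1 ≤ d) (hn : 1 ≤ n) (y : Fin n → EuclideanSpace ℝ (Fin d))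
    (hcenter : ∑ j, y j = 0)
    (hscatter : ∀ k l : Fin d, ∑ j, y j k * y j l = if k = l then (n : ℝ) else 0) :
    Tendsto (fun a : ℝ =>
        a ^ ((d : ℝ) / 2 + 2) / ((n : ℝ) * π ^ ((d : ℝ) / 2)) * (16 * Tstat d n y a))
      atTop (nhds (mrsSkew d n y + 2 * mardiaSkew d n y)) :=
  Tstat_tendsto_skewness_atTop_general d n hn y hcenter hscatter
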